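/- Policy gradients bound (supplementary lemma, Eqs. (13)–(14) of the paper): let π_ψ be a policy, d a pmf on B, and K a set of policies containing at least one optimal policy. Then sup_{κ∈K} ∑_b d(b)·∑_a κ(a|b)·Q^{π_ψ}(a,b) ≤ sup_{κ∈K} ∑_b d(b)·∑_a κ(a|b)·Q^{κ}(a,b), i.e. maximizing the surrogate objective defined through the behavioural policy's Q-function lower-bounds maximizing the true objective. -/
import Mathlib

open scoped BigOperators Classical

noncomputable section

/-- A probability mass function on a finite type. -/
def IsPmf {X : Type*} [Fintype X] (p : X → ℝ) : Prop :=
  (∀ x, 0 ≤ p x) ∧ ∑ x, p x = 1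

/-- Time-`t` distribution of the chain on belief states started at `b₀`, following
policy `κ` with transition kernel `p`. -/
def chain {B A : Type*} [Fintype B] [Fintype A]
    (p : B → A → B → ℝ) (κ : B → A → ℝ) (b₀ : B) : ℕ → B → ℝ
  | 0 => fun b => if b = b₀ then 1 else 0
  | t + 1 => fun b'' => ∑ b' : B, ∑ a : A, chain p κ b₀ t b' * κ b' a * p b' a b''

section Aux
variable {B A : Type*} [Fintype B] [Fintype A]
variable (p : B → A → B → ℝ) (κ : B → A → ℝ)

lemma chain_nonneg (hp : ∀ b a, IsPmf (p b a)) (hκ : ∀ b, IsPmf (κ b)) (b₀ : B) :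
    ∀ t b, 0 ≤ chain p κ b₀ t b := by
  intro t
  induction t with
  | zero => intro b; unfold chain; split <;> norm_num
  | succ t ih =>
    intro b
    unfold chain
    apply Finset.sum_nonneg; intro b' _
    apply Finset.sum_nonneg; intro a _
    exact mul_nonneg (mul_nonneg (ih b') ((hκ b').1 a)) ((hp b' a).1 b)

lemma chain_sum_eq_one (hp : ∀ b a, IsPmf (p b a)) (hκ : ∀ b, IsPmf (κ b)) (b₀ : B) :
    ∀ t, ∑ b, chain p κ b₀ t b = 1 := by
  intro t
  induction t with
  | zero => simp [chain]
  | succ t ih =>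
    show (∑ b'' : B, ∑ b' : B, ∑ a : A, chain p κ b₀ t b' * κ b' a * p b' a b'') = 1
    rw [Finset.sum_comm]
    have : ∀ b' : B, (∑ b'' : B, ∑ a : A, chain p κ b₀ t b' * κ b' a * p b' a b'')
        = chain p κ b₀ t b' := by
      intro b'
      rw [Finset.sum_comm]
      have h1 : ∀ a : A, (∑ b'' : B, chain p κ b₀ t b' * κ b' a * p b' a b'')
          = chain p κ b₀ t b' * κ b' a := by
        intro a
        rw [← Finset.mul_sum, (hp b' a).2, mul_one]
      simp only [h1, ← Finset.mul_sum, (hκ b').2, mul_one]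
    simp only [this, ih]

lemma chain_le_one (hp : ∀ b a, IsPmf (p b a)) (hκ : ∀ b, IsPmf (κ b)) (b₀ : B) (t : ℕ) (b : B) :
    chain p κ b₀ t b ≤ 1 := by
  calc chain p κ b₀ t b ≤ ∑ b', chain p κ b₀ t b' :=
        Finset.single_le_sum (fun b' _ => chain_nonneg p κ hp hκ b₀ t b') (Finset.mem_univ b)
    _ = 1 := chain_sum_eq_one p κ hp hκ b₀ t

/-- first-step decomposition of the chain -/
lemma chain_first_step (b₀ : B) :
    ∀ t b, chain p κ b₀ (t+1) b = ∑ b₁, (∑ a, κ b₀ a * p b₀ a b₁) * chain p κ b₁ t b := by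
  intro t
  induction t with
  | zero =>
    intro b
    show (∑ b' : B, ∑ a : A, chain p κ b₀ 0 b' * κ b' a * p b' a b) = _
    have L : (∑ b' : B, ∑ a : A, chain p κ b₀ 0 b' * κ b' a * p b' a b)
        = ∑ a, κ b₀ a * p b₀ a b := by
      unfold chain
      simp only [ite_mul, one_mul, zero_mul]
      rw [Finset.sum_comm]
      simp
    have R : (∑ b₁, (∑ a, κ b₀ a * p b₀ a b₁) * chain p κ b₁ 0 b)
        = ∑ a, κ b₀ a * p b₀ a b := by
      unfold chain
      simp only [mul_ite, mul_one, mul_zero, Finset.sum_ite_eq, Finset.mem_univ, if_true]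
    rw [L, R]
  | succ t ih =>
    intro b
    show (∑ b' : B, ∑ a : A, chain p κ b₀ (t+1) b' * κ b' a * p b' a b) = _
    have key : ∀ b' : B, ∀ a : A, chain p κ b₀ (t+1) b' * κ b' a * p b' a b
        = ∑ b₁, (∑ a', κ b₀ a' * p b₀ a' b₁) * (chain p κ b₁ t b' * κ b' a * p b' a b) := by
      intro b' a
      rw [ih b', Finset.sum_mul, Finset.sum_mul]
      refine Finset.sum_congr rfl fun b₁ _ => by ring
    simp only [key]
    have swap1 : ∀ b' : B, (∑ a : A, ∑ b₁ : B,
        (∑ a', κ b₀ a' * p b₀ a' b₁) * (chain p κ b₁ t b' * κ b' a * p b' a b))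
        = ∑ b₁ : B, ∑ a : A,
        (∑ a', κ b₀ a' * p b₀ a' b₁) * (chain p κ b₁ t b' * κ b' a * p b' a b) :=
      fun b' => Finset.sum_comm
    simp only [swap1]
    rw [Finset.sum_comm]
    refine Finset.sum_congr rfl fun b₁ _ => ?_
    simp only [← Finset.mul_sum]
    rfl

end Aux

/-- Value function `V^κ(b₀) = ∑_t γ^t·E[r(b_t,a_t,b_{t+1})]` of the chain started
at `b₀`. -/
def Vval {B A : Type*} [Fintype B] [Fintype A]
    (γ : ℝ) (p : B → A → B → ℝ) (r : B → A → B → ℝ)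
    (κ : B → A → ℝ) (b₀ : B) : ℝ :=
  ∑' t : ℕ, γ ^ t * ∑ b : B, ∑ a : A, ∑ b' : B,
    chain p κ b₀ t b * κ b a * p b a b' * r b a b'

/-- Q-function `Q^κ(a,b) = ∑_{b'} p(b'|b,a)·(r(b,a,b') + γ·V^κ(b'))`. -/
def Qval {B A : Type*} [Fintype B] [Fintype A]
    (γ : ℝ) (p : B → A → B → ℝ) (r : B → A → B → ℝ)
    (κ : B → A → ℝ) (a : A) (b : B) : ℝ :=
  ∑ b' : B, p b a b' * (r b a b' + γ * Vval γ p r κ b')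

section Aux2
variable {B A : Type*} [Fintype B] [Fintype A]
variable (p : B → A → B → ℝ) (r : B → A → B → ℝ) (κ : B → A → ℝ)

/-- expected reward at time t -/
def eR (b₀ : B) (t : ℕ) : ℝ :=
  ∑ b : B, ∑ a : A, ∑ b' : B, chain p κ b₀ t b * κ b a * p b a b' * r b a b'

/-- uniform reward bound -/
def Mr : ℝ := ∑ b : B, ∑ a : A, ∑ b' : B, |r b a b'|

lemma Mr_nonneg : 0 ≤ Mr r := by unfold Mr; positivity

lemma abs_r_le_Mr (b : B) (a : A) (b' : B) : |r b a b'| ≤ Mr r := by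
  unfold Mr
  calc |r b a b'| ≤ ∑ z : B, |r b a z| :=
        Finset.single_le_sum (f := fun z => |r b a z|) (fun _ _ => abs_nonneg _) (Finset.mem_univ b')
    _ ≤ ∑ y : A, ∑ z : B, |r b y z| :=
        Finset.single_le_sum (f := fun y => ∑ z : B, |r b y z|)
          (fun _ _ => Finset.sum_nonneg fun _ _ => abs_nonneg _) (Finset.mem_univ a)
    _ ≤ _ :=
        Finset.single_le_sum (f := fun x => ∑ y : A, ∑ z : B, |r x y z|)
          (fun _ _ => Finset.sum_nonneg fun _ _ => Finset.sum_nonneg fun _ _ => abs_nonneg _)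
          (Finset.mem_univ b)

variable (hp : ∀ b a, IsPmf (p b a)) (hκ : ∀ b, IsPmf (κ b))

include hp hκ

lemma weight_sum (b₀ : B) (t : ℕ) :
    ∑ b : B, ∑ a : A, ∑ b' : B, chain p κ b₀ t b * κ b a * p b a b' = 1 := by
  have A1 : ∀ b a, (∑ b' : B, chain p κ b₀ t b * κ b a * p b a b')
      = chain p κ b₀ t b * κ b a := fun b a => by
    rw [← Finset.mul_sum, (hp b a).2, mul_one]
  have A2 : ∀ b, (∑ a : A, chain p κ b₀ t b * κ b a) = chain p κ b₀ t b := fun b => by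
    rw [← Finset.mul_sum, (hκ b).2, mul_one]
  simp only [A1, A2]
  exact chain_sum_eq_one p κ hp hκ b₀ t

lemma abs_eR_le (b₀ : B) (t : ℕ) : |eR p r κ b₀ t| ≤ Mr r := by
  have wnn : ∀ b a b', 0 ≤ chain p κ b₀ t b * κ b a * p b a b' := fun b a b' =>
    mul_nonneg (mul_nonneg (chain_nonneg p κ hp hκ b₀ t b) ((hκ b).1 a)) ((hp b a).1 b')
  have h1 : |eR p r κ b₀ t| ≤ ∑ b : B, ∑ a : A, ∑ b' : B,
      chain p κ b₀ t b * κ b a * p b a b' * Mr r := by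
    refine (Finset.abs_sum_le_sum_abs _ _).trans (Finset.sum_le_sum fun b _ => ?_)
    refine (Finset.abs_sum_le_sum_abs _ _).trans (Finset.sum_le_sum fun a _ => ?_)
    refine (Finset.abs_sum_le_sum_abs _ _).trans (Finset.sum_le_sum fun b' _ => ?_)
    rw [abs_mul, abs_of_nonneg (wnn b a b')]
    exact mul_le_mul_of_nonneg_left (abs_r_le_Mr r b a b') (wnn b a b')
  calc |eR p r κ b₀ t| ≤ _ := h1
    _ = (∑ b : B, ∑ a : A, ∑ b' : B, chain p κ b₀ t b * κ b a * p b a b') * Mr r := by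
        simp only [Finset.sum_mul]
    _ = Mr r := by rw [weight_sum p κ hp hκ b₀ t, one_mul]

end Aux2

section Aux3
variable {B A : Type*} [Fintype B] [Fintype A]
variable (p : B → A → B → ℝ) (r : B → A → B → ℝ) (γ : ℝ) (κ : B → A → ℝ)

lemma summable_geom_mul (hγ0 : 0 ≤ γ) (hγ1 : γ < 1) (f : ℕ → ℝ) (C : ℝ)
    (hf : ∀ t, |f t| ≤ C) : Summable (fun t => γ ^ t * f t) := by
  have habs : Summable (fun t => |γ ^ t * f t|) := by
    refine Summable.of_nonneg_of_le (fun t => abs_nonneg _) (fun t => ?_)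
      ((summable_geometric_of_lt_one hγ0 hγ1).mul_left C)
    rw [abs_mul, abs_pow, abs_of_nonneg hγ0, mul_comm]
    exact mul_le_mul_of_nonneg_right (hf t) (pow_nonneg hγ0 t)
  exact habs.of_abs

variable (hγ0 : 0 ≤ γ) (hγ1 : γ < 1) (hp : ∀ b a, IsPmf (p b a)) (hκ : ∀ b, IsPmf (κ b))

include hγ0 hγ1 hp hκ

lemma summable_eR (b₀ : B) : Summable (fun t => γ ^ t * eR p r κ b₀ t) :=
  summable_geom_mul γ hγ0 hγ1 _ (Mr r) (abs_eR_le p r κ hp hκ b₀)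

omit hγ0 hγ1 hp hκ

lemma Vval_eq_tsum_eR (b : B) : Vval γ p r κ b = ∑' t, γ ^ t * eR p r κ b t := rfl

include hγ0 hγ1 hp hκ

lemma abs_Vval_le (b : B) : |Vval γ p r κ b| ≤ Mr r / (1 - γ) := by
  have hsum := summable_eR p r γ κ hγ0 hγ1 hp hκ b
  have habs : Summable (fun t => |γ ^ t * eR p r κ b t|) := hsum.abs
  rw [Vval_eq_tsum_eR]
  calc |∑' t, γ ^ t * eR p r κ b t| ≤ ∑' t, |γ ^ t * eR p r κ b t| := by
        have h2 : ‖∑' t, γ ^ t * eR p r κ b t‖ ≤ ∑' t, ‖γ ^ t * eR p r κ b t‖ :=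
          norm_tsum_le_tsum_norm (by simpa only [Real.norm_eq_abs] using habs)
        simpa only [Real.norm_eq_abs] using h2
    _ ≤ ∑' t : ℕ, Mr r * γ ^ t := by
        refine Summable.tsum_le_tsum (fun t => ?_) habs
          ((summable_geometric_of_lt_one hγ0 hγ1).mul_left _)
        rw [abs_mul, abs_pow, abs_of_nonneg hγ0, mul_comm]
        exact mul_le_mul_of_nonneg_right (abs_eR_le p r κ hp hκ b t) (pow_nonneg hγ0 t)
    _ = Mr r * (1 - γ)⁻¹ := by
        rw [tsum_mul_left, tsum_geometric_of_lt_one hγ0 hγ1]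
    _ = Mr r / (1 - γ) := (div_eq_mul_inv _ _).symm

omit hγ0 hγ1 hp hκ

lemma eR_zero (b : B) :
    eR p r κ b 0 = ∑ a : A, ∑ b' : B, κ b a * p b a b' * r b a b' := by
  unfold eR
  rw [Finset.sum_eq_single b]
  · show (∑ a : A, ∑ b' : B, chain p κ b 0 b * κ b a * p b a b' * r b a b') = _
    unfold chain
    simp
  · intro x _ hx
    show (∑ a : A, ∑ b' : B, chain p κ b 0 x * κ x a * p x a b' * r x a b') = 0
    unfold chain
    simp [hx]
  · intro h; exact absurd (Finset.mem_univ b) h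

lemma eR_succ (b₀ : B) (t : ℕ) :
    eR p r κ b₀ (t + 1) = ∑ b₁, (∑ a, κ b₀ a * p b₀ a b₁) * eR p r κ b₁ t := by
  unfold eR
  have key : ∀ b a b', chain p κ b₀ (t+1) b * κ b a * p b a b' * r b a b'
      = ∑ b₁, (∑ a', κ b₀ a' * p b₀ a' b₁)
          * (chain p κ b₁ t b * κ b a * p b a b' * r b a b') := by
    intro b a b'
    rw [chain_first_step p κ b₀ t b, Finset.sum_mul, Finset.sum_mul, Finset.sum_mul]
    refine Finset.sum_congr rfl fun b₁ _ => by ring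
  simp only [key]
  calc (∑ b : B, ∑ a : A, ∑ b' : B, ∑ b₁ : B, (∑ a', κ b₀ a' * p b₀ a' b₁)
          * (chain p κ b₁ t b * κ b a * p b a b' * r b a b'))
      = ∑ b : B, ∑ a : A, ∑ b₁ : B, ∑ b' : B, (∑ a', κ b₀ a' * p b₀ a' b₁)
          * (chain p κ b₁ t b * κ b a * p b a b' * r b a b') :=
        Finset.sum_congr rfl fun b _ => Finset.sum_congr rfl fun a _ => Finset.sum_comm
    _ = ∑ b : B, ∑ b₁ : B, ∑ a : A, ∑ b' : B, (∑ a', κ b₀ a' * p b₀ a' b₁)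
          * (chain p κ b₁ t b * κ b a * p b a b' * r b a b') :=
        Finset.sum_congr rfl fun b _ => Finset.sum_comm
    _ = ∑ b₁ : B, ∑ b : B, ∑ a : A, ∑ b' : B, (∑ a', κ b₀ a' * p b₀ a' b₁)
          * (chain p κ b₁ t b * κ b a * p b a b' * r b a b') := Finset.sum_comm
    _ = ∑ b₁ : B, (∑ a', κ b₀ a' * p b₀ a' b₁)
          * ∑ b : B, ∑ a : A, ∑ b' : B, chain p κ b₁ t b * κ b a * p b a b' * r b a b' := by
        simp only [← Finset.mul_sum]

include hγ0 hγ1 hp hκ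

/-- Bellman equation -/
lemma bellman (b : B) :
    Vval γ p r κ b = ∑ a, κ b a * Qval γ p r κ a b := by
  have hsum := summable_eR p r γ κ hγ0 hγ1 hp hκ
  have step1 : Vval γ p r κ b
      = eR p r κ b 0 + γ * ∑ b₁, (∑ a, κ b a * p b a b₁) * Vval γ p r κ b₁ := by
    rw [Vval_eq_tsum_eR, Summable.tsum_eq_zero_add (hsum b)]
    simp only [pow_zero, one_mul]
    congr 1
    have h1 : ∀ t : ℕ, γ ^ (t+1) * eR p r κ b (t+1)
        = γ * ∑ b₁, (∑ a, κ b a * p b a b₁) * (γ ^ t * eR p r κ b₁ t) := by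
      intro t
      rw [eR_succ, pow_succ, Finset.mul_sum, Finset.mul_sum]
      refine Finset.sum_congr rfl fun b₁ _ => by ring
    simp only [h1]
    rw [tsum_mul_left]
    congr 1
    rw [Summable.tsum_finsetSum (f := fun (b₁ : B) (t : ℕ) => (∑ a, κ b a * p b a b₁) * (γ ^ t * eR p r κ b₁ t))
      (fun b₁ _ => ((hsum b₁).mul_left _))]
    refine Finset.sum_congr rfl fun b₁ _ => ?_
    rw [tsum_mul_left]
    rfl
  rw [step1, eR_zero]
  have expand : ∀ a, κ b a * Qval γ p r κ a b
      = ∑ b' : B, (κ b a * p b a b' * r b a b'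
          + γ * (κ b a * p b a b' * Vval γ p r κ b')) := by
    intro a; unfold Qval; rw [Finset.mul_sum]
    exact Finset.sum_congr rfl fun b' _ => by ring
  simp only [expand, Finset.sum_add_distrib]
  congr 1
  rw [Finset.mul_sum]
  rw [show (∑ a : A, ∑ b' : B, γ * (κ b a * p b a b' * Vval γ p r κ b'))
      = ∑ b' : B, ∑ a : A, γ * (κ b a * p b a b' * Vval γ p r κ b') from Finset.sum_comm]
  refine Finset.sum_congr rfl fun b' _ => ?_
  rw [Finset.sum_mul, Finset.mul_sum]

end Aux3

section Aux4
variable {B A : Type*} [Fintype B] [Fintype A]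
variable (p : B → A → B → ℝ) (r : B → A → B → ℝ) (γ : ℝ) (κ : B → A → ℝ)

variable (hp : ∀ b a, IsPmf (p b a)) (hκ : ∀ b, IsPmf (κ b))

include hp hκ

lemma abs_sum_chain_le (b₀ : B) (t : ℕ) (g : B → ℝ) :
    |∑ b', chain p κ b₀ t b' * g b'| ≤ ∑ b', |g b'| := by
  refine (Finset.abs_sum_le_sum_abs _ _).trans (Finset.sum_le_sum fun b' _ => ?_)
  rw [abs_mul, abs_of_nonneg (chain_nonneg p κ hp hκ b₀ t b')]
  calc chain p κ b₀ t b' * |g b'| ≤ 1 * |g b'| :=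
        mul_le_mul_of_nonneg_right (chain_le_one p κ hp hκ b₀ t b') (abs_nonneg _)
    _ = |g b'| := one_mul _

omit hp hκ

variable (μ : B → A → ℝ)
variable (hγ0 : 0 ≤ γ) (hγ1 : γ < 1) (hμ : ∀ b, IsPmf (μ b))

include hγ0 hγ1 hp hκ hμ

/-- Performance-difference lemma. -/
lemma pdl (b : B) :
    Vval γ p r κ b = Vval γ p r μ b
      + ∑' t, γ ^ t * ∑ b', chain p κ b t b'
          * ((∑ a, κ b' a * Qval γ p r μ a b') - Vval γ p r μ b') := by
  set V : B → ℝ := fun b' => Vval γ p r μ b' with hV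
  set Δ : B → ℝ := fun b' => (∑ a, κ b' a * Qval γ p r μ a b') - V b' with hΔ
  set c : ℕ → ℝ := fun t => γ ^ t * ∑ b', chain p κ b t b' * V b' with hc
  -- pointwise expansion
  have expand : ∀ t, ∀ b' : B, chain p κ b t b' * (∑ a, κ b' a * Qval γ p r μ a b')
      = (∑ a, ∑ b'', chain p κ b t b' * κ b' a * p b' a b'' * r b' a b'')
        + ∑ a, ∑ b'', γ * (chain p κ b t b' * κ b' a * p b' a b'' * V b'') := by
    intro t b'
    rw [Finset.mul_sum, ← Finset.sum_add_distrib]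
    refine Finset.sum_congr rfl fun a _ => ?_
    unfold Qval
    rw [Finset.mul_sum, Finset.mul_sum, ← Finset.sum_add_distrib]
    refine Finset.sum_congr rfl fun b'' _ => by simp only [hV]; ring
  have inner : ∀ t, (∑ b', chain p κ b t b' * Δ b')
      = eR p r κ b t + (γ * ∑ b'', chain p κ b (t+1) b'' * V b''
          - ∑ b', chain p κ b t b' * V b') := by
    intro t
    have h1 : (∑ b', chain p κ b t b' * Δ b')
        = (∑ b', chain p κ b t b' * (∑ a, κ b' a * Qval γ p r μ a b'))
          - ∑ b', chain p κ b t b' * V b' := by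
      rw [← Finset.sum_sub_distrib]
      refine Finset.sum_congr rfl fun b' _ => by rw [hΔ]; ring
    rw [h1]
    simp only [expand t]
    have h2 : (∑ b' : B, ∑ a : A, ∑ b'' : B, γ * (chain p κ b t b' * κ b' a * p b' a b'' * V b''))
        = γ * ∑ b'' : B, chain p κ b (t+1) b'' * V b'' := by
      simp only [← Finset.mul_sum]
      congr 1
      calc (∑ b' : B, ∑ a : A, ∑ b'' : B, chain p κ b t b' * κ b' a * p b' a b'' * V b'')
          = ∑ b' : B, ∑ b'' : B, ∑ a : A, chain p κ b t b' * κ b' a * p b' a b'' * V b'' :=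
            Finset.sum_congr rfl fun b' _ => Finset.sum_comm
        _ = ∑ b'' : B, ∑ b' : B, ∑ a : A, chain p κ b t b' * κ b' a * p b' a b'' * V b'' :=
            Finset.sum_comm
        _ = ∑ b'' : B, chain p κ b (t+1) b'' * V b'' := by
            refine Finset.sum_congr rfl fun b'' _ => ?_
            show _ = (∑ b' : B, ∑ a : A, chain p κ b t b' * κ b' a * p b' a b'') * V b''
            rw [Finset.sum_mul]
            refine Finset.sum_congr rfl fun b' _ => ?_
            rw [Finset.sum_mul]
    rw [Finset.sum_add_distrib, h2]
    show _ = eR p r κ b t + _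
    unfold eR
    ring
  have At : ∀ t, γ ^ t * ∑ b', chain p κ b t b' * Δ b'
      = γ ^ t * eR p r κ b t + (c (t+1) - c t) := by
    intro t
    rw [inner t, hc]
    simp only [pow_succ]
    ring
  -- summability
  have CV : ∀ t, |∑ b', chain p κ b t b' * V b'| ≤ ∑ b', |V b'| := fun t =>
    abs_sum_chain_le p κ hp hκ b t V
  have hcs : Summable c := summable_geom_mul γ hγ0 hγ1 _ (∑ b', |V b'|) CV
  have hcs1 : Summable (fun t => c (t+1)) := (summable_nat_add_iff 1).mpr hcs
  have hes : Summable (fun t => γ ^ t * eR p r κ b t) :=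
    summable_eR p r γ κ hγ0 hγ1 hp hκ b
  have hts : Summable (fun t => γ ^ t * ∑ b', chain p κ b t b' * Δ b') :=
    summable_geom_mul γ hγ0 hγ1 _ (∑ b', |Δ b'|)
      (fun t => abs_sum_chain_le p κ hp hκ b t Δ)
  have hc0 : c 0 = Vval γ p r μ b := by
    rw [hc]
    simp only [pow_zero, one_mul]
    show (∑ b' : B, (if b' = b then (1:ℝ) else 0) * V b') = _
    simp [Finset.sum_ite_eq', hV]
  have key : (∑' t, γ ^ t * ∑ b', chain p κ b t b' * Δ b')
      = Vval γ p r κ b - Vval γ p r μ b := by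
    calc (∑' t, γ ^ t * ∑ b', chain p κ b t b' * Δ b')
        = ∑' t, (γ ^ t * eR p r κ b t + (c (t+1) - c t)) := by
          exact tsum_congr At
      _ = (∑' t, γ ^ t * eR p r κ b t) + ∑' t, (c (t+1) - c t) :=
          Summable.tsum_add hes (hcs1.sub hcs)
      _ = Vval γ p r κ b + ((∑' t, c (t+1)) - ∑' t, c t) := by
          rw [Summable.tsum_sub hcs1 hcs, Vval_eq_tsum_eR]
      _ = Vval γ p r κ b - c 0 := by
          rw [Summable.tsum_eq_zero_add hcs]
          ring
      _ = Vval γ p r κ b - Vval γ p r μ b := by rw [hc0]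
  rw [key]
  ring

end Aux4

/-- Optimal value function `V*(b) = ⨆_κ V^κ(b)` over all policies. -/
def Vstar {B A : Type*} [Fintype B] [Fintype A]
    (γ : ℝ) (p : B → A → B → ℝ) (r : B → A → B → ℝ) (b : B) : ℝ :=
  ⨆ κ : {κ : B → A → ℝ // ∀ b', IsPmf (κ b')}, Vval γ p r κ.1 b

section Aux5
variable {B A : Type*} [Fintype B] [Fintype A]
variable (p : B → A → B → ℝ) (r : B → A → B → ℝ) (γ : ℝ)
variable (hγ0 : 0 ≤ γ) (hγ1 : γ < 1) (hp : ∀ b a, IsPmf (p b a))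

include hγ0 hγ1 hp

lemma bddAbove_vrange (b : B) :
    BddAbove (Set.range fun κ : {κ : B → A → ℝ // ∀ b', IsPmf (κ b')} =>
      Vval γ p r κ.1 b) := by
  refine ⟨Mr r / (1 - γ), ?_⟩
  rintro x ⟨κ, rfl⟩
  exact (abs_le.mp (abs_Vval_le p r γ κ.1 hγ0 hγ1 hp κ.2 b)).2

lemma vval_le_vstar (κ : B → A → ℝ) (hκ : ∀ b', IsPmf (κ b')) (b : B) :
    Vval γ p r κ b ≤ Vstar γ p r b :=
  le_ciSup (bddAbove_vrange p r γ hγ0 hγ1 hp b) ⟨κ, hκ⟩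

/-- the key lemma: `T^κ V* ≤ V*` -/
lemma key_le (κs : B → A → ℝ) (hκs : ∀ b, IsPmf (κs b))
    (hopt : ∀ b, Vval γ p r κs b = Vstar γ p r b)
    (κ : B → A → ℝ) (hκ : ∀ b, IsPmf (κ b)) (b : B) :
    (∑ a, κ b a * Qval γ p r κs a b) ≤ Vval γ p r κs b := by
  classical
  set κh : B → A → ℝ := fun b' =>
    if Vval γ p r κs b' ≤ ∑ a, κ b' a * Qval γ p r κs a b' then κ b' else κs b' with hκh
  have hκhp : ∀ b', IsPmf (κh b') := by
    intro b'
    rw [hκh]; dsimp only; split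
    · exact hκ b'
    · exact hκs b'
  have hΔnn : ∀ b', 0 ≤ (∑ a, κh b' a * Qval γ p r κs a b') - Vval γ p r κs b' := by
    intro b'
    rw [hκh]; dsimp only
    split
    · rename_i h; linarith
    · rw [← bellman p r γ κs hγ0 hγ1 hp hκs b']; simp
  have hpdl := pdl p r γ κh hp hκhp κs hγ0 hγ1 hκs b
  set Δ : B → ℝ := fun b' =>
    (∑ a, κh b' a * Qval γ p r κs a b') - Vval γ p r κs b' with hΔ
  have hpdl' : Vval γ p r κh b = Vval γ p r κs b
      + ∑' t, γ ^ t * ∑ b', chain p κh b t b' * Δ b' := hpdl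
  have hTnn : ∀ t, 0 ≤ γ ^ t * ∑ b', chain p κh b t b' * Δ b' := by
    intro t
    refine mul_nonneg (pow_nonneg hγ0 t) (Finset.sum_nonneg fun b' _ =>
      mul_nonneg (chain_nonneg p κh hp hκhp b t b') (hΔnn b'))
  have hts : Summable (fun t => γ ^ t * ∑ b', chain p κh b t b' * Δ b') :=
    summable_geom_mul γ hγ0 hγ1 _ (∑ b', |Δ b'|)
      (fun t => abs_sum_chain_le p κh hp hκhp b t Δ)
  have hT0 : γ ^ 0 * (∑ b', chain p κh b 0 b' * Δ b') = Δ b := by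
    simp only [pow_zero, one_mul]
    show (∑ b' : B, (if b' = b then (1:ℝ) else 0) * Δ b') = Δ b
    simp [Finset.sum_ite_eq']
  have hle : Δ b ≤ ∑' t, γ ^ t * ∑ b', chain p κh b t b' * Δ b' := by
    calc Δ b = γ ^ 0 * (∑ b', chain p κh b 0 b' * Δ b') := hT0.symm
      _ = ∑ t ∈ ({0} : Finset ℕ), γ ^ t * ∑ b', chain p κh b t b' * Δ b' :=
          (Finset.sum_singleton (fun t => γ ^ t * ∑ b', chain p κh b t b' * Δ b') 0).symm
      _ ≤ _ := Summable.sum_le_tsum {0} (fun i _ => hTnn i) hts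
  have hub : Vval γ p r κh b ≤ Vval γ p r κs b := by
    rw [hopt b]
    exact vval_le_vstar p r γ hγ0 hγ1 hp κh hκhp b
  have hΔb : Δ b ≤ 0 := by linarith
  by_cases hcase : Vval γ p r κs b ≤ ∑ a, κ b a * Qval γ p r κs a b
  · have hκhb : κh b = κ b := by rw [hκh]; simp [hcase]
    have : Δ b = (∑ a, κ b a * Qval γ p r κs a b) - Vval γ p r κs b := by
      rw [hΔ]; dsimp only; rw [hκhb]
    linarith [this ▸ hΔb]
  · linarith [not_le.mp hcase]

lemma qval_mono (μ₁ μ₂ : B → A → ℝ)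
    (h : ∀ b', Vval γ p r μ₁ b' ≤ Vval γ p r μ₂ b') (a : A) (b : B) :
    Qval γ p r μ₁ a b ≤ Qval γ p r μ₂ a b := by
  unfold Qval
  refine Finset.sum_le_sum fun b' _ => ?_
  refine mul_le_mul_of_nonneg_left ?_ ((hp b a).1 b')
  have := mul_le_mul_of_nonneg_left (h b') hγ0
  linarith

omit hγ0 hγ1 hp in
/-- averaging against a pmf preserves an abs bound -/
lemma abs_pmf_avg {X : Type*} [Fintype X] (w : X → ℝ) (hw : IsPmf w)
    (g : X → ℝ) (C : ℝ) (hg : ∀ x, |g x| ≤ C) : |∑ x, w x * g x| ≤ C := by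
  calc |∑ x, w x * g x| ≤ ∑ x, w x * C := by
        refine (Finset.abs_sum_le_sum_abs _ _).trans (Finset.sum_le_sum fun x _ => ?_)
        rw [abs_mul, abs_of_nonneg (hw.1 x)]
        exact mul_le_mul_of_nonneg_left (hg x) (hw.1 x)
    _ = C := by rw [← Finset.sum_mul, hw.2, one_mul]

lemma abs_Qval_le (μ : B → A → ℝ) (hμ : ∀ b, IsPmf (μ b)) (a : A) (b : B) :
    |Qval γ p r μ a b| ≤ Mr r + Mr r / (1 - γ) := by
  unfold Qval
  refine abs_pmf_avg (p b a) (hp b a) _ _ fun b' => ?_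
  have h1 := abs_r_le_Mr r b a b'
  have h2 := abs_Vval_le p r γ μ hγ0 hγ1 hp hμ b'
  have h3 : |γ * Vval γ p r μ b'| ≤ Mr r / (1 - γ) := by
    rw [abs_mul, abs_of_nonneg hγ0]
    calc γ * |Vval γ p r μ b'| ≤ 1 * (Mr r / (1 - γ)) := by
          refine mul_le_mul hγ1.le h2 (abs_nonneg _) zero_le_one
      _ = _ := one_mul _
  calc |r b a b' + γ * Vval γ p r μ b'| ≤ |r b a b'| + |γ * Vval γ p r μ b'| := abs_add_le _ _
    _ ≤ Mr r + Mr r / (1 - γ) := add_le_add h1 h3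

end Aux5

/-- Policy gradients bound: maximizing the surrogate objective defined through the
behavioural policy's Q-function lower-bounds maximizing the true objective, over any
set `K` of policies containing at least one optimal policy. -/
theorem policy_gradients_bound
    {B A : Type*} [Fintype B] [Fintype A] [Nonempty B] [Nonempty A]
    (p : B → A → B → ℝ) (hp : ∀ b a, IsPmf (p b a))
    (r : B → A → B → ℝ)
    (γ : ℝ) (hγ0 : 0 ≤ γ) (hγ1 : γ < 1)
    (πψ : B → A → ℝ) (hπψ : ∀ b, IsPmf (πψ b))
    (d : B → ℝ) (hd : IsPmf d)
    (K : Set (B → A → ℝ)) (hK : ∀ κ ∈ K, ∀ b, IsPmf (κ b))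
    (hKopt : ∃ κ ∈ K, ∀ b, Vval γ p r κ b = Vstar γ p r b) :
    (⨆ κ ∈ K, ∑ b, d b * ∑ a, κ b a * Qval γ p r πψ a b)
      ≤ ⨆ κ ∈ K, ∑ b, d b * ∑ a, κ b a * Qval γ p r κ a b := by
  classical
  obtain ⟨κs, hκsK, hopt⟩ := hKopt
  have hκs : ∀ b, IsPmf (κs b) := hK κs hκsK
  set MQ : ℝ := Mr r + Mr r / (1 - γ) with hMQ
  -- the objective on the RHS is uniformly bounded over K
  set F : (B → A → ℝ) → ℝ := fun κ => ∑ b, d b * ∑ a, κ b a * Qval γ p r κ a b with hF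
  have hFbd : ∀ κ ∈ K, |F κ| ≤ MQ := by
    intro κ hκK
    refine abs_pmf_avg d hd _ _ fun b => ?_
    exact abs_pmf_avg (κ b) (hK κ hκK b) _ _ fun a =>
      abs_Qval_le p r γ hγ0 hγ1 hp κ (hK κ hκK) a b
  have RHS_bdd : BddAbove (Set.range fun κ => ⨆ _ : κ ∈ K, F κ) := by
    refine ⟨max MQ 0, ?_⟩
    rintro x ⟨κ, rfl⟩
    show (⨆ _ : κ ∈ K, F κ) ≤ max MQ 0
    by_cases h : κ ∈ K
    · haveI : Nonempty (κ ∈ K) := ⟨h⟩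
      rw [ciSup_const]
      exact le_max_of_le_left (abs_le.mp (hFbd κ h)).2
    · haveI : IsEmpty (κ ∈ K) := ⟨h⟩
      rw [Real.iSup_of_isEmpty]
      exact le_max_right _ _
  -- pointwise comparison for κ ∈ K
  have hψle : ∀ b', Vval γ p r πψ b' ≤ Vval γ p r κs b' := by
    intro b'
    rw [hopt b']
    exact vval_le_vstar p r γ hγ0 hγ1 hp πψ hπψ b'
  have hmain : ∀ κ ∈ K, (∑ b, d b * ∑ a, κ b a * Qval γ p r πψ a b) ≤ F κs := by
    intro κ hκK
    have hκ : ∀ b, IsPmf (κ b) := hK κ hκK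
    have step1 : ∀ b, (∑ a, κ b a * Qval γ p r πψ a b)
        ≤ ∑ a, κ b a * Qval γ p r κs a b :=
      fun b => Finset.sum_le_sum fun a _ => mul_le_mul_of_nonneg_left
        (qval_mono p r γ hγ0 hγ1 hp πψ κs hψle a b) ((hκ b).1 a)
    have step2 : ∀ b, (∑ a, κ b a * Qval γ p r κs a b) ≤ Vval γ p r κs b :=
      fun b => key_le p r γ hγ0 hγ1 hp κs hκs hopt κ hκ b
    have step3 : ∀ b, Vval γ p r κs b = ∑ a, κs b a * Qval γ p r κs a b :=
      fun b => bellman p r γ κs hγ0 hγ1 hp hκs b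
    calc (∑ b, d b * ∑ a, κ b a * Qval γ p r πψ a b)
        ≤ ∑ b, d b * ∑ a, κs b a * Qval γ p r κs a b := by
          refine Finset.sum_le_sum fun b _ => mul_le_mul_of_nonneg_left ?_ (hd.1 b)
          exact ((step1 b).trans (step2 b)).trans (le_of_eq (step3 b))
      _ = F κs := rfl
  -- assemble
  refine ciSup_le fun κ => ?_
  by_cases h : κ ∈ K
  · haveI : Nonempty (κ ∈ K) := ⟨h⟩
    rw [ciSup_const]
    calc (∑ b, d b * ∑ a, κ b a * Qval γ p r πψ a b)
        ≤ F κs := hmain κ h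
      _ = ⨆ _ : κs ∈ K, F κs := by
          haveI : Nonempty (κs ∈ K) := ⟨hκsK⟩
          rw [ciSup_const]
      _ ≤ _ := le_ciSup RHS_bdd κs
  · haveI : IsEmpty (κ ∈ K) := ⟨h⟩
    rw [Real.iSup_of_isEmpty]
    calc (0:ℝ) = ⨆ _ : κ ∈ K, F κ := (Real.iSup_of_isEmpty _).symm
      _ ≤ _ := le_ciSup RHS_bdd κ
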